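/- Path characterization of subtyping in 𝕋_C: for all σ, τ ∈ 𝕋_C, σ ≤ τ if and only if for each path π ∈ ℙ(τ) there exists a path π′ ∈ ℙ(σ) with π′ ≤ π such that, moreover: if π is a type variable α (respectively a constant a), then π′ is the same variable α (respectively the same constant a); if π ≡ σ₂→τ₂, then π′ ≡ σ₁→τ₁ with σ₂ ≤ σ₁ and τ₁ ≤ τ₂; if π ≡ c(τ₁), then π′ ≡ c(σ₁) with σ₁ ≤ τ₁. -/

import Mathlib

/-- Intersection types with constructors `𝕋_C`: constants, type variables, `ω`,
arrows, intersections and unary constructors (constructor names in `ℕ`). -/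
inductive TyC where
  | const : Nat → TyC
  | tvar : Nat → TyC
  | omega : TyC
  | arrow : TyC → TyC → TyC
  | inter : TyC → TyC → TyC
  | ctor : Nat → TyC → TyC
deriving DecidableEq

/-- Subtyping on `𝕋_C`: the least preorder with the BCD axioms together with
covariance of constructors and distribution of constructors over intersection. -/
inductive SubC : TyC → TyC → Prop where
  | refl (σ : TyC) : SubC σ σ
  | trans {σ τ υ : TyC} : SubC σ τ → SubC τ υ → SubC σ υ
  | le_omega (σ : TyC) : SubC σ .omega
  | omega_arrow : SubC .omega (.arrow .omega .omega)
  | inter_left (σ τ : TyC) : SubC (.inter σ τ) σ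
  | inter_right (σ τ : TyC) : SubC (.inter σ τ) τ
  | le_inter {σ τ₁ τ₂ : TyC} : SubC σ τ₁ → SubC σ τ₂ → SubC σ (.inter τ₁ τ₂)
  | arrow_inter (σ τ₁ τ₂ : TyC) :
      SubC (.inter (.arrow σ τ₁) (.arrow σ τ₂)) (.arrow σ (.inter τ₁ τ₂))
  | arrow_mono {σ₁ σ₂ τ₁ τ₂ : TyC} : SubC σ₂ σ₁ → SubC τ₁ τ₂ →
      SubC (.arrow σ₁ τ₁) (.arrow σ₂ τ₂)
  | ctor_mono {τ₁ τ₂ : TyC} (c : Nat) : SubC τ₁ τ₂ → SubC (.ctor c τ₁) (.ctor c τ₂)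
  | ctor_inter (c : Nat) (τ₁ τ₂ : TyC) :
      SubC (.inter (.ctor c τ₁) (.ctor c τ₂)) (.ctor c (.inter τ₁ τ₂))

/-- Type equality on `𝕋_C`: mutual subtyping. -/
def TyCEq (σ τ : TyC) : Prop := SubC σ τ ∧ SubC τ σ

/-- Finite intersection of a list of `𝕋_C` types (`ω` for the empty list). -/
def interListC : List TyC → TyC
  | [] => .omega
  | [π] => π
  | π :: π' :: rest => .inter π (interListC (π' :: rest))
/-- Paths in `𝕋_C`: `π ::= a | α | σ→π | c(ω) | c(π)`. -/
inductive IsPath : TyC → Prop where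
  | const (a : Nat) : IsPath (.const a)
  | tvar (a : Nat) : IsPath (.tvar a)
  | arrow (σ : TyC) {π : TyC} : IsPath π → IsPath (.arrow σ π)
  | ctor_omega (c : Nat) : IsPath (.ctor c .omega)
  | ctor (c : Nat) {π : TyC} : IsPath π → IsPath (.ctor c π)

/-- The set `ℙ(τ)` of paths in `τ` (as a list). -/
def pathsC : TyC → List TyC
  | .const a => [.const a]
  | .tvar a => [.tvar a]
  | .omega => []
  | .arrow σ τ => (pathsC τ).map (.arrow σ)
  | .inter σ τ => pathsC σ ++ pathsC τ
  | .ctor c τ =>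
      let ps := pathsC τ
      if ps.isEmpty then [.ctor c .omega] else ps.map (.ctor c)

/-! Every type equals the intersection of its paths: `→` and `c(·)` distribute over `∩`, a type
without paths equals `ω`, and `ω ≤ ω → ω` absorbs a path-free codomain. Since `σ` lies below each
of its own paths, this gives the converse direction. The direct one is an induction on the
derivation of `σ ≤ τ`: the shape-preserving relation `PathLE` between paths is a preorder, and
each rule of `SubC` is reflected by it on paths. -/

def PathLE (π' π : TyC) : Prop :=
  SubC π' π ∧
  (∀ a, π = .const a → π' = .const a) ∧
  (∀ a, π = .tvar a → π' = .tvar a) ∧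
  (∀ σ₂ τ₂, π = .arrow σ₂ τ₂ → ∃ σ₁ τ₁, π' = .arrow σ₁ τ₁ ∧ SubC σ₂ σ₁ ∧ SubC τ₁ τ₂) ∧
  (∀ c τ₁, π = .ctor c τ₁ → ∃ σ₁, π' = .ctor c σ₁ ∧ SubC σ₁ τ₁)

namespace PathLE

theorem refl (π : TyC) : PathLE π π :=
  ⟨.refl π, fun _ h => h, fun _ h => h,
    fun _ _ h => ⟨_, _, h, .refl _, .refl _⟩, fun _ _ h => ⟨_, h, .refl _⟩⟩

theorem trans {π₁ π₂ π₃ : TyC} (h₁ : PathLE π₁ π₂) (h₂ : PathLE π₂ π₃) : PathLE π₁ π₃ := by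
  obtain ⟨le₁, const₁, tvar₁, arrow₁, ctor₁⟩ := h₁
  obtain ⟨le₂, const₂, tvar₂, arrow₂, ctor₂⟩ := h₂
  refine ⟨.trans le₁ le₂, fun a h => const₁ a (const₂ a h), fun a h => tvar₁ a (tvar₂ a h),
    fun σ τ h => ?_, fun c τ h => ?_⟩
  · obtain ⟨σ', τ', h', hσ, hτ⟩ := arrow₂ σ τ h
    obtain ⟨σ'', τ'', h'', hσ', hτ'⟩ := arrow₁ σ' τ' h'
    exact ⟨σ'', τ'', h'', .trans hσ hσ', .trans hτ' hτ⟩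
  · obtain ⟨τ', h', hτ⟩ := ctor₂ c τ h
    obtain ⟨τ'', h'', hτ'⟩ := ctor₁ c τ' h'
    exact ⟨τ'', h'', .trans hτ' hτ⟩

theorem arrow {σ₁ σ₂ τ₁ τ₂ : TyC} (hσ : SubC σ₂ σ₁) (hτ : SubC τ₁ τ₂) :
    PathLE (.arrow σ₁ τ₁) (.arrow σ₂ τ₂) := by
  refine ⟨.arrow_mono hσ hτ, by simp, by simp, ?_, by simp⟩
  rintro _ _ ⟨⟩
  exact ⟨σ₁, τ₁, rfl, hσ, hτ⟩

theorem ctor (c : Nat) {τ₁ τ₂ : TyC} (h : SubC τ₁ τ₂) : PathLE (.ctor c τ₁) (.ctor c τ₂) := by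
  refine ⟨.ctor_mono c h, by simp, by simp, by simp, ?_⟩
  rintro _ _ ⟨⟩
  exact ⟨τ₁, rfl, h⟩

end PathLE

theorem interListC_le_of_mem {L : List TyC} {π : TyC} (h : π ∈ L) : SubC (interListC L) π := by
  induction L with
  | nil => simp at h
  | cons a L ih =>
    cases L with
    | nil => rw [List.mem_singleton.mp h]; exact .refl a
    | cons b M =>
      rcases List.mem_cons.mp h with rfl | h
      · exact .inter_left _ _
      · exact .trans (.inter_right _ _) (ih h)

theorem le_interListC {σ : TyC} {L : List TyC} (h : ∀ π ∈ L, SubC σ π) :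
    SubC σ (interListC L) := by
  induction L with
  | nil => exact .le_omega σ
  | cons a L ih =>
    cases L with
    | nil => exact h a List.mem_cons_self
    | cons b M =>
      exact .le_inter (h a List.mem_cons_self) (ih fun π hπ => h π (List.mem_cons_of_mem a hπ))

theorem interListC_append_le (L M : List TyC) :
    SubC (interListC (L ++ M)) (.inter (interListC L) (interListC M)) :=
  .le_inter (le_interListC fun _ hπ => interListC_le_of_mem (List.mem_append_left M hπ))
    (le_interListC fun _ hπ => interListC_le_of_mem (List.mem_append_right L hπ))

theorem interListC_map_le {f : TyC → TyC}
    (hf : ∀ τ₁ τ₂, SubC (.inter (f τ₁) (f τ₂)) (f (.inter τ₁ τ₂)))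
    {L : List TyC} (hL : L ≠ []) : SubC (interListC (L.map f)) (f (interListC L)) := by
  induction L with
  | nil => exact absurd rfl hL
  | cons a L ih =>
    cases L with
    | nil => exact .refl _
    | cons b M =>
      exact .trans (.le_inter (.inter_left _ _) (.trans (.inter_right _ _) (ih (by simp))))
        (hf a (interListC (b :: M)))

theorem mem_pathsC_ctor {c : Nat} {τ π : TyC} :
    π ∈ pathsC (.ctor c τ) ↔
      (pathsC τ = [] ∧ π = .ctor c .omega) ∨ ∃ ρ ∈ pathsC τ, π = .ctor c ρ := by
  by_cases h : pathsC τ = []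
  · simp [pathsC, h]
  · simp only [pathsC, List.isEmpty_iff, h, if_false, List.mem_map, false_and, false_or]
    exact exists_congr fun ρ => and_congr_right fun _ => eq_comm

theorem ctor_mem_pathsC_ctor (c : Nat) {τ π : TyC} (h : π ∈ pathsC τ) :
    .ctor c π ∈ pathsC (.ctor c τ) :=
  mem_pathsC_ctor.mpr (.inr ⟨π, h, rfl⟩)

theorem exists_pathLE_ctor_omega (c : Nat) (τ : TyC) :
    ∃ π' ∈ pathsC (.ctor c τ), PathLE π' (.ctor c .omega) := by
  by_cases h : pathsC τ = []
  · exact ⟨_, mem_pathsC_ctor.mpr (.inl ⟨h, rfl⟩), .refl _⟩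
  · obtain ⟨ρ, hρ⟩ := List.exists_mem_of_ne_nil _ h
    exact ⟨_, ctor_mem_pathsC_ctor c hρ, .ctor c (.le_omega ρ)⟩

theorem le_of_mem_pathsC {τ π : TyC} (h : π ∈ pathsC τ) : SubC τ π := by
  induction τ generalizing π with
  | const a => rw [List.mem_singleton.mp h]; exact .refl _
  | tvar a => rw [List.mem_singleton.mp h]; exact .refl _
  | omega => simp [pathsC] at h
  | arrow σ τ _ ih =>
    obtain ⟨ρ, hρ, rfl⟩ := List.mem_map.mp h
    exact .arrow_mono (.refl σ) (ih hρ)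
  | inter σ τ ihσ ihτ =>
    rcases List.mem_append.mp h with h | h
    · exact .trans (.inter_left σ τ) (ihσ h)
    · exact .trans (.inter_right σ τ) (ihτ h)
  | ctor c τ ih =>
    rcases mem_pathsC_ctor.mp h with ⟨-, rfl⟩ | ⟨ρ, hρ, rfl⟩
    · exact .ctor_mono c (.le_omega τ)
    · exact .ctor_mono c (ih hρ)

theorem interListC_pathsC_le (τ : TyC) : SubC (interListC (pathsC τ)) τ := by
  induction τ with
  | const a => exact .refl _
  | tvar a => exact .refl _
  | omega => exact .refl _
  | arrow σ τ _ ih =>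
    by_cases h : pathsC τ = []
    · rw [h] at ih
      simpa [pathsC, h, interListC] using
        SubC.trans .omega_arrow (.arrow_mono (.le_omega σ) ih)
    · exact .trans (interListC_map_le (SubC.arrow_inter σ) h) (.arrow_mono (.refl σ) ih)
  | inter σ τ ihσ ihτ =>
    exact .trans (interListC_append_le _ _)
      (.le_inter (.trans (.inter_left _ _) ihσ) (.trans (.inter_right _ _) ihτ))
  | ctor c τ ih =>
    by_cases h : pathsC τ = []
    · rw [h] at ih
      simpa [pathsC, h, interListC] using SubC.ctor_mono c ih
    · simpa [pathsC, h] using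
        SubC.trans (interListC_map_le (SubC.ctor_inter c) h) (.ctor_mono c ih)

theorem subC_of_forall_mem_pathsC {σ τ : TyC}
    (h : ∀ π ∈ pathsC τ, ∃ π' ∈ pathsC σ, SubC π' π) : SubC σ τ := by
  refine .trans (le_interListC fun π hπ => ?_) (interListC_pathsC_le τ)
  obtain ⟨π', hπ', hle⟩ := h π hπ
  exact .trans (le_of_mem_pathsC hπ') hle

theorem SubC.exists_pathLE {σ τ : TyC} (h : SubC σ τ) :
    ∀ π ∈ pathsC τ, ∃ π' ∈ pathsC σ, PathLE π' π := by
  induction h with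
  | refl σ => exact fun π h => ⟨π, h, .refl π⟩
  | trans _ _ ih₁ ih₂ =>
    intro π h
    obtain ⟨π₂, h₂, le₂⟩ := ih₂ π h
    obtain ⟨π₁, h₁, le₁⟩ := ih₁ π₂ h₂
    exact ⟨π₁, h₁, le₁.trans le₂⟩
  | le_omega σ => simp [pathsC]
  | omega_arrow => simp [pathsC]
  | inter_left σ τ => exact fun π h => ⟨π, List.mem_append_left _ h, .refl π⟩
  | inter_right σ τ => exact fun π h => ⟨π, List.mem_append_right _ h, .refl π⟩
  | le_inter _ _ ih₁ ih₂ =>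
    intro π h
    rcases List.mem_append.mp h with h | h
    exacts [ih₁ π h, ih₂ π h]
  | arrow_inter σ τ₁ τ₂ =>
    intro π h
    obtain ⟨ρ, hρ, rfl⟩ := List.mem_map.mp h
    refine ⟨.arrow σ ρ, ?_, .refl _⟩
    simpa [pathsC] using hρ
  | arrow_mono hσ _ _ ihτ =>
    intro π h
    obtain ⟨ρ, hρ, rfl⟩ := List.mem_map.mp h
    obtain ⟨ρ', hρ', le⟩ := ihτ ρ hρ
    exact ⟨.arrow _ ρ', List.mem_map_of_mem hρ', .arrow hσ le.1⟩
  | ctor_mono c _ ih =>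
    intro π h
    rcases mem_pathsC_ctor.mp h with ⟨-, rfl⟩ | ⟨ρ, hρ, rfl⟩
    · exact exists_pathLE_ctor_omega c _
    · obtain ⟨ρ', hρ', le⟩ := ih ρ hρ
      exact ⟨_, ctor_mem_pathsC_ctor c hρ', .ctor c le.1⟩
  | ctor_inter c τ₁ τ₂ =>
    intro π h
    rcases mem_pathsC_ctor.mp h with ⟨-, rfl⟩ | ⟨ρ, hρ, rfl⟩
    · obtain ⟨π', hπ', le⟩ := exists_pathLE_ctor_omega c τ₁
      exact ⟨π', List.mem_append_left _ hπ', le⟩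
    · refine ⟨.ctor c ρ, ?_, .refl _⟩
      rcases List.mem_append.mp hρ with hρ | hρ
      exacts [List.mem_append_left _ (ctor_mem_pathsC_ctor c hρ),
        List.mem_append_right _ (ctor_mem_pathsC_ctor c hρ)]

/-- Path characterization of subtyping in `𝕋_C`. -/
theorem path_subtyping (σ τ : TyC) :
    SubC σ τ ↔
      ∀ π ∈ pathsC τ, ∃ π' ∈ pathsC σ, SubC π' π ∧
        (∀ a, π = .const a → π' = .const a) ∧
        (∀ a, π = .tvar a → π' = .tvar a) ∧
        (∀ σ₂ τ₂, π = .arrow σ₂ τ₂ →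
          ∃ σ₁ τ₁, π' = .arrow σ₁ τ₁ ∧ SubC σ₂ σ₁ ∧ SubC τ₁ τ₂) ∧
        (∀ c τ₁, π = .ctor c τ₁ → ∃ σ₁, π' = .ctor c σ₁ ∧ SubC σ₁ τ₁) :=
  ⟨SubC.exists_pathLE, fun h =>
    subC_of_forall_mem_pathsC fun π hπ => (h π hπ).imp fun _ ⟨hπ', hle, _⟩ => ⟨hπ', hle⟩⟩
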